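/- Consider one inner loop of SARAH (SARAH-IN) with each f_i L-smooth. For every j ≥ 1, conditioned on the history F_j generated by w_0 and the mini-batches I_1,...,I_{j−1}: E[ ||∇P(w_j) − v_j||² | F_j ] = ||∇P(w_{j−1}) − v_{j−1}||² − ||∇P(w_j) − ∇P(w_{j−1})||² + E[ ||v_j − v_{j−1}||² | F_j ]. -/

import Mathlib

open scoped BigOperators

noncomputable section

/-- Vectors in `ℝ^d`. -/
abbrev Vec (d : ℕ) := EuclideanSpace ℝ (Fin d)

/-- The type of mini-batches of size `b` from `{1,…,n}` (modeled as `Fin n`). -/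
def Batch (n b : ℕ) : Type := {s : Finset (Fin n) // s.card = b}

instance (n b : ℕ) : Fintype (Batch n b) :=
  inferInstanceAs (Fintype {s : Finset (Fin n) // s.card = b})

/-- Expectation (uniform average) over a finite sample space. -/
def expec {Ω : Type*} [Fintype Ω] (F : Ω → ℝ) : ℝ :=
  (Fintype.card Ω : ℝ)⁻¹ * ∑ ω, F ω

/-- The SARAH-IN state `(w_t, v_t)` given a starting point `w0`, a learning rate `η`,
a batch size `b` and a sequence of mini-batches `I` (where `I t` is the batch used to
form `v_t`, for `t ≥ 1`). -/
def sarahState {d n : ℕ} (f : Fin n → Vec d → ℝ) (w0 : Vec d) (η : ℝ) (b : ℕ)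
    (I : ℕ → Finset (Fin n)) : ℕ → Vec d × Vec d
  | 0 => (w0, (n : ℝ)⁻¹ • ∑ i, gradient (f i) w0)
  | t + 1 =>
    let p := sarahState f w0 η b I t
    let w' := p.1 - η • p.2
    (w', (b : ℝ)⁻¹ • ∑ i ∈ I (t + 1), (gradient (f i) w' - gradient (f i) p.1) + p.2)

/-- Extend a finite sequence of mini-batches to all of `ℕ` (indices `≥ T` are irrelevant). -/
def pad {n b T : ℕ} (ω : Fin T → Batch n b) : ℕ → Finset (Fin n) :=
  fun t => if h : t < T then (ω ⟨t, h⟩).1 else ∅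

/-!
Write `Δ_J = v_j - v_{j-1}`. The state at time `j - 1` does not depend on the resampled batch
`J`, and `Δ_J` is an unbiased estimate of `∇P(w_j) - ∇P(w_{j-1})`, since every index lies in
the same number `(n-1).choose (b-1)` of batches. Expanding `‖(∇P(w_j) - v_{j-1}) - Δ_J‖²` and
averaging over `J` turns the cross term into `2⟪∇P(w_j) - v_{j-1}, ∇P(w_j) - ∇P(w_{j-1})⟫`,
which recombines with the first square into
`‖∇P(w_{j-1}) - v_{j-1}‖² - ‖∇P(w_j) - ∇P(w_{j-1})‖²`.
-/

open Finset

theorem gradient_const_mul_sum {F ι : Type*} [NormedAddCommGroup F] [InnerProductSpace ℝ F]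
    [CompleteSpace F] {s : Finset ι} {f : ι → F → ℝ} {x : F}
    (hf : ∀ i ∈ s, DifferentiableAt ℝ (f i) x) (c : ℝ) :
    gradient (fun y => c * ∑ i ∈ s, f i y) x = c • ∑ i ∈ s, gradient (f i) x := by
  have hsum : DifferentiableAt ℝ (fun y => ∑ i ∈ s, f i y) x := DifferentiableAt.fun_sum hf
  simp only [gradient, fderiv_const_mul hsum, fderiv_fun_sum hf, map_smul, map_sum]

theorem card_batch (n b : ℕ) : Fintype.card (Batch n b) = n.choose b := by
  rw [show Fintype.card (Batch n b) = Fintype.card {s : Finset (Fin n) // s.card = b} from rfl,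
    Fintype.card_finset_len, Fintype.card_fin]

theorem sum_batch_eq_sum_powersetCard {M : Type*} [AddCommMonoid M] {n b : ℕ}
    (g : Finset (Fin n) → M) :
    ∑ J : Batch n b, g J.1 = ∑ s ∈ univ.powersetCard b, g s :=
  (sum_subtype (p := fun s : Finset (Fin n) => s.card = b)
    (F := inferInstanceAs (Fintype (Batch n b))) _ (fun _ => mem_powersetCard_univ) g).symm

theorem sum_batch_sum_mem {M : Type*} [AddCommMonoid M] {n b : ℕ} (hb : 1 ≤ b) (x : Fin n → M) :
    ∑ J : Batch n b, ∑ i ∈ J.1, x i = (n - 1).choose (b - 1) • ∑ i, x i := by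
  classical
  have hcount (i : Fin n) :
      #((univ.powersetCard b).filter (i ∈ ·)) = (n - 1).choose (b - 1) := by
    simpa [singleton_subset_iff] using
      card_filter_powersetCard_subset {i} univ b (subset_univ _) (by simpa using hb)
  rw [sum_batch_eq_sum_powersetCard (fun s => ∑ i ∈ s, x i), sum_comm' (t' := univ)
    (s' := fun i => (univ.powersetCard b).filter (i ∈ ·)) (by simp)]
  simp only [sum_const, hcount, smul_sum]

theorem batch_average_unbiased {E : Type*} [AddCommGroup E] [Module ℝ E] {n b : ℕ} (hb : 1 ≤ b)
    (hbn : b ≤ n) (x : Fin n → E) :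
    (Fintype.card (Batch n b) : ℝ)⁻¹ • ∑ J : Batch n b, (b : ℝ)⁻¹ • ∑ i ∈ J.1, x i
      = (n : ℝ)⁻¹ • ∑ i, x i := by
  have hchoose : (n : ℝ) * (n - 1).choose (b - 1) = n.choose b * b := by
    obtain ⟨m, rfl⟩ : ∃ m, n = m + 1 := ⟨n - 1, by omega⟩
    obtain ⟨k, rfl⟩ : ∃ k, b = k + 1 := ⟨b - 1, by omega⟩
    exact_mod_cast Nat.add_one_mul_choose_eq m k
  have hb' : (b : ℝ) ≠ 0 := by positivity
  have hn' : (n : ℝ) ≠ 0 := Nat.cast_ne_zero.2 (by omega)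
  have hnb : (n.choose b : ℝ) ≠ 0 := by exact_mod_cast (Nat.choose_pos hbn).ne'
  rw [← smul_sum, sum_batch_sum_mem hb, card_batch, smul_smul, ← Nat.cast_smul_eq_nsmul ℝ,
    smul_smul]
  congr 1
  field_simp
  linarith

theorem expec_norm_sub_sq {Ω E : Type*} [Fintype Ω] [Nonempty Ω] [NormedAddCommGroup E]
    [InnerProductSpace ℝ E] (c μ : E) (X : Ω → E)
    (hμ : (Fintype.card Ω : ℝ)⁻¹ • ∑ ω, X ω = μ) :
    expec (fun ω => ‖c - X ω‖ ^ 2) = ‖c - μ‖ ^ 2 - ‖μ‖ ^ 2 + expec (fun ω => ‖X ω‖ ^ 2) := by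
  have hcard : (Fintype.card Ω : ℝ) ≠ 0 := by positivity
  have hinner : inner ℝ c μ = (Fintype.card Ω : ℝ)⁻¹ * ∑ ω, inner ℝ c (X ω) := by
    rw [← hμ, inner_smul_right, inner_sum]
  simp only [expec, norm_sub_sq_real, sum_add_distrib, sum_sub_distrib, sum_const, card_univ,
    nsmul_eq_mul, ← mul_sum, hinner]
  field_simp
  ring

theorem sarahState_congr {d n : ℕ} (f : Fin n → Vec d → ℝ) (w0 : Vec d) (η : ℝ) (b : ℕ)
    {I I' : ℕ → Finset (Fin n)} :
    ∀ t, (∀ s ≤ t, I s = I' s) → sarahState f w0 η b I t = sarahState f w0 η b I' t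
  | 0, _ => rfl
  | t + 1, h => by
    simp only [sarahState, sarahState_congr f w0 η b t fun s hs => h s (hs.trans t.le_succ),
      h (t + 1) le_rfl]

theorem sarah_in_conditional_variance_step_general
    {d n : ℕ}
    (f : Fin n → Vec d → ℝ)
    (hdiff : ∀ i, Differentiable ℝ (f i))
    (P : Vec d → ℝ) (hP : P = fun w => (n : ℝ)⁻¹ * ∑ i, f i w)
    (w0 : Vec d) (η : ℝ) (b : ℕ) (hb : 1 ≤ b) (hbn : b ≤ n)
    (Ihist : ℕ → Finset (Fin n))
    (j : ℕ) (hj : 1 ≤ j) :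
    expec (fun J : Batch n b =>
        ‖gradient P ((sarahState f w0 η b (Function.update Ihist j J.1) j).1)
          - (sarahState f w0 η b (Function.update Ihist j J.1) j).2‖ ^ 2)
      = ‖gradient P ((sarahState f w0 η b Ihist (j - 1)).1)
            - (sarahState f w0 η b Ihist (j - 1)).2‖ ^ 2
        - ‖gradient P ((sarahState f w0 η b Ihist j).1)
            - gradient P ((sarahState f w0 η b Ihist (j - 1)).1)‖ ^ 2
        + expec (fun J : Batch n b =>
            ‖(sarahState f w0 η b (Function.update Ihist j J.1) j).2
              - (sarahState f w0 η b Ihist (j - 1)).2‖ ^ 2) := by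
  obtain ⟨k, rfl⟩ : ∃ k, j = k + 1 := ⟨j - 1, by omega⟩
  have hpast : ∀ J : Batch n b, sarahState f w0 η b (Function.update Ihist (k + 1) J.1) k
      = sarahState f w0 η b Ihist k := fun J =>
    sarahState_congr f w0 η b k fun s hs => Function.update_of_ne (by omega) _ _
  have hgrad : ∀ y, gradient P y = (n : ℝ)⁻¹ • ∑ i, gradient (f i) y := fun y => by
    rw [hP]; exact gradient_const_mul_sum (fun i _ => (hdiff i).differentiableAt) _
  simp only [Nat.add_sub_cancel, sarahState, hpast, Function.update_self]
  set w := (sarahState f w0 η b Ihist k).1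
  set v := (sarahState f w0 η b Ihist k).2
  set x : Fin n → Vec d := fun i => gradient (f i) (w - η • v) - gradient (f i) w
  have hmean : (Fintype.card (Batch n b) : ℝ)⁻¹ • ∑ J : Batch n b, (b : ℝ)⁻¹ • ∑ i ∈ J.1, x i
      = gradient P (w - η • v) - gradient P w := by
    rw [batch_average_unbiased hb hbn x, hgrad, hgrad, ← smul_sub, ← sum_sub_distrib]
  have : Nonempty (Batch n b) :=
    Fintype.card_pos_iff.1 ((card_batch n b).symm ▸ Nat.choose_pos hbn)
  have hexpand := expec_norm_sub_sq (gradient P (w - η • v) - v) _ _ hmean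
  rw [sub_sub_sub_cancel_left] at hexpand
  convert hexpand using 4 with J
  · rw [sub_add_eq_sub_sub_swap]
  · rw [add_sub_cancel_right]

/-- Conditional expectation step of Lemma 2: conditioned on the history `I_1,…,I_{j−1}`
(encoded by a fixed batch sequence `Ihist`, with the `j`-th batch `J` resampled
uniformly), for `j ≥ 1`:
`E[‖∇P(w_j) − v_j‖² | F_j] = ‖∇P(w_{j−1}) − v_{j−1}‖² − ‖∇P(w_j) − ∇P(w_{j−1})‖²
  + E[‖v_j − v_{j−1}‖² | F_j]`. -/
theorem sarah_in_conditional_variance_step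
    {d n : ℕ} (hn : 1 ≤ n)
    (f : Fin n → Vec d → ℝ) (L : ℝ) (hL : 0 < L)
    (hdiff : ∀ i, Differentiable ℝ (f i))
    (hsmooth : ∀ i (w w' : Vec d),
      ‖gradient (f i) w - gradient (f i) w'‖ ≤ L * ‖w - w'‖)
    (P : Vec d → ℝ) (hP : P = fun w => (n : ℝ)⁻¹ * ∑ i, f i w)
    (w0 : Vec d) (η : ℝ) (hη : 0 < η) (b : ℕ) (hb : 1 ≤ b) (hbn : b ≤ n)
    (Ihist : ℕ → Finset (Fin n)) (hhist : ∀ t, (Ihist t).card = b)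
    (j : ℕ) (hj : 1 ≤ j) :
    expec (fun J : Batch n b =>
        ‖gradient P ((sarahState f w0 η b (Function.update Ihist j J.1) j).1)
          - (sarahState f w0 η b (Function.update Ihist j J.1) j).2‖ ^ 2)
      = ‖gradient P ((sarahState f w0 η b Ihist (j - 1)).1)
            - (sarahState f w0 η b Ihist (j - 1)).2‖ ^ 2
        - ‖gradient P ((sarahState f w0 η b Ihist j).1)
            - gradient P ((sarahState f w0 η b Ihist (j - 1)).1)‖ ^ 2
        + expec (fun J : Batch n b =>
            ‖(sarahState f w0 η b (Function.update Ihist j J.1) j).2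
              - (sarahState f w0 η b Ihist (j - 1)).2‖ ^ 2) :=
  sarah_in_conditional_variance_step_general f hdiff P hP w0 η b hb hbn Ihist j hj
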